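/- Let f : C → D be a conservative monoidal functor between monoidal categories, and let M be an object of C admitting a left dual and a right dual. If f(M) is invertible in D (i.e., the evaluation and coevaluation maps for f(M) are isomorphisms), then M is invertible in C. -/

import Mathlib

open CategoryTheory MonoidalCategory

/-!
A monoidal functor `F` carries the exact pairing `(M, Mᘁ)` to an exact pairing
`(F M, F Mᘁ)` whose coevaluation and evaluation are the images of those of `M`, up to the
structure isomorphisms of `F`. If `F M` is invertible, `tensorLeft (F M)` is an equivalence,
hence so is its left adjoint `tensorLeft (F Mᘁ)`; the unit and counit of this adjunction at
`𝟙_ D` are the coevaluation and evaluation, which are therefore isomorphisms. Conservativity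
of `F` then makes `η_ M Mᘁ` and `ε_ M Mᘁ` isomorphisms, so `Mᘁ` is an inverse of `M`.
-/

namespace CategoryTheory

open Functor.LaxMonoidal Functor.OplaxMonoidal

variable {C D : Type*} [Category C] [Category D] [MonoidalCategory C] [MonoidalCategory D]

theorem isEquivalence_tensorLeft_of_invertible {X N : C} (e : X ⊗ N ≅ 𝟙_ C) (i : N ⊗ X ≅ 𝟙_ C) :
    (tensorLeft X).IsEquivalence :=
  Functor.IsEquivalence.mk' (tensorLeft N)
    ((leftUnitorNatIso C).symm ≪≫ (curriedTensor C).mapIso i.symm ≪≫ tensorLeftTensor N X)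
    ((tensorLeftTensor X N).symm ≪≫ (curriedTensor C).mapIso e ≪≫ leftUnitorNatIso C)

theorem isIso_whiskerRight_tensorUnit_iff {X Y : C} (f : X ⟶ Y) :
    IsIso (f ▷ 𝟙_ C) ↔ IsIso f := by
  rw [whiskerRight_id, isIso_comp_left_iff, isIso_comp_right_iff]

theorem tensorLeftAdjunction_unit_app (X Y Z : C) [ExactPairing X Y] :
    (tensorLeftAdjunction X Y).unit.app Z = (λ_ Z).inv ≫ η_ X Y ▷ Z ≫ (α_ X Y Z).hom := by
  simp [tensorLeftAdjunction, tensorLeftHomEquiv]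

theorem tensorLeftAdjunction_counit_app (X Y Z : C) [ExactPairing X Y] :
    (tensorLeftAdjunction X Y).counit.app Z = (α_ Y X Z).inv ≫ ε_ X Y ▷ Z ≫ (λ_ Z).hom := by
  simp [tensorLeftAdjunction, tensorLeftHomEquiv]

section

variable (X Y : C) [ExactPairing X Y] [(tensorLeft X).IsEquivalence]

theorem isIso_coevaluation_of_isEquivalence : IsIso (η_ X Y) := by
  have := (tensorLeftAdjunction X Y).isEquivalence_left_of_isEquivalence_right
  have : IsIso ((tensorLeftAdjunction X Y).unit.app (𝟙_ C)) := inferInstance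
  rwa [tensorLeftAdjunction_unit_app, isIso_comp_left_iff, isIso_comp_right_iff,
    isIso_whiskerRight_tensorUnit_iff] at this

theorem isIso_evaluation_of_isEquivalence : IsIso (ε_ X Y) := by
  have := (tensorLeftAdjunction X Y).isEquivalence_left_of_isEquivalence_right
  have : IsIso ((tensorLeftAdjunction X Y).counit.app (𝟙_ C)) := inferInstance
  rwa [tensorLeftAdjunction_counit_app, isIso_comp_left_iff, isIso_comp_right_iff,
    isIso_whiskerRight_tensorUnit_iff] at this

end

abbrev ExactPairing.map (F : C ⥤ D) [F.Monoidal] (X Y : C) [ExactPairing X Y] :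
    ExactPairing (F.obj X) (F.obj Y) where
  coevaluation' := ε F ≫ F.map (η_ X Y) ≫ δ F X Y
  evaluation' := μ F Y X ≫ F.map (ε_ X Y) ≫ η F
  evaluation_coevaluation' := by
    -- writing the associator of `D` as the image of that of `C` turns the zigzag identity
    -- into the image under `F` of the zigzag identity of `(X, Y)`
    rw [Functor.Monoidal.map_associator']
    simp only [comp_whiskerRight, MonoidalCategory.whiskerLeft_comp, Category.assoc,
      Functor.Monoidal.whiskerRight_δ_μ_assoc, Functor.Monoidal.whiskerLeft_δ_μ_assoc,
      μ_natural_left_assoc, δ_natural_right_assoc]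
    simp only [← Functor.map_comp_assoc, ExactPairing.evaluation_coevaluation]
    simp
  coevaluation_evaluation' := by
    rw [Functor.Monoidal.map_associator_inv']
    simp only [comp_whiskerRight, MonoidalCategory.whiskerLeft_comp, Category.assoc,
      Functor.Monoidal.whiskerRight_δ_μ_assoc, Functor.Monoidal.whiskerLeft_δ_μ_assoc,
      μ_natural_right_assoc, δ_natural_left_assoc]
    simp only [← Functor.map_comp_assoc, ExactPairing.coevaluation_evaluation]
    simp

section

variable (F : C ⥤ D) [F.Monoidal] (X Y : C) [ExactPairing X Y]

theorem ExactPairing.map_coevaluation :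
    letI := ExactPairing.map F X Y
    F.map (η_ X Y) = η F ≫ η_ (F.obj X) (F.obj Y) ≫ μ F X Y := by
  change _ = η F ≫ (ε F ≫ F.map (η_ X Y) ≫ δ F X Y) ≫ μ F X Y
  simp

theorem ExactPairing.map_evaluation :
    letI := ExactPairing.map F X Y
    F.map (ε_ X Y) = δ F Y X ≫ ε_ (F.obj X) (F.obj Y) ≫ ε F := by
  change _ = δ F Y X ≫ (μ F Y X ≫ F.map (ε_ X Y) ≫ η F) ≫ ε F
  simp

end

end CategoryTheory

theorem conservative_reflects_invertible_general
    {C D : Type*} [Category C] [Category D]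
    [MonoidalCategory C] [MonoidalCategory D]
    (F : C ⥤ D) [F.Monoidal] [F.ReflectsIsomorphisms]
    (M : C) [HasRightDual M]
    (h : ∃ N : D, Nonempty (F.obj M ⊗ N ≅ 𝟙_ D) ∧ Nonempty (N ⊗ F.obj M ≅ 𝟙_ D)) :
    ∃ N : C, Nonempty (M ⊗ N ≅ 𝟙_ C) ∧ Nonempty (N ⊗ M ≅ 𝟙_ C) := by
  obtain ⟨N, ⟨e⟩, ⟨i⟩⟩ := h
  let := ExactPairing.map F M Mᘁ
  have := isEquivalence_tensorLeft_of_invertible e i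
  have := isIso_coevaluation_of_isEquivalence (F.obj M) (F.obj Mᘁ)
  have := isIso_evaluation_of_isEquivalence (F.obj M) (F.obj Mᘁ)
  have : IsIso (F.map (η_ M Mᘁ)) := by rw [ExactPairing.map_coevaluation]; infer_instance
  have : IsIso (F.map (ε_ M Mᘁ)) := by rw [ExactPairing.map_evaluation]; infer_instance
  have := isIso_of_reflects_iso (η_ M Mᘁ) F
  have := isIso_of_reflects_iso (ε_ M Mᘁ) F
  exact ⟨Mᘁ, ⟨(asIso (η_ M Mᘁ)).symm⟩, ⟨asIso (ε_ M Mᘁ)⟩⟩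

/-- A conservative monoidal functor reflects invertibility of objects that
admit both a left and a right dual. -/
theorem conservative_reflects_invertible
    {C D : Type*} [Category C] [Category D]
    [MonoidalCategory C] [MonoidalCategory D]
    (F : C ⥤ D) [F.Monoidal] [F.ReflectsIsomorphisms]
    (M : C) [HasLeftDual M] [HasRightDual M]
    (h : ∃ N : D, Nonempty (F.obj M ⊗ N ≅ 𝟙_ D) ∧ Nonempty (N ⊗ F.obj M ≅ 𝟙_ D)) :
    ∃ N : C, Nonempty (M ⊗ N ≅ 𝟙_ C) ∧ Nonempty (N ⊗ M ≅ 𝟙_ C) :=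
  conservative_reflects_invertible_general F M h
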